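/- Per-decision hindsight policy gradient: for any fixed goal g', the gradient ∇η(θ) equals Σ_τ p(τ | g', θ) Σ_g p(g) Σ_{t=1}^{T−1} ∇ log p(a_t | s_t, g, θ) Σ_{t'=t+1}^T [ ∏_{k=1}^{t'−1} p(a_k | s_k, g, θ)/p(a_k | s_k, g', θ) ] r(s_{t'}, g); that is, the importance weight for the reward at time t' may be truncated to the first t'−1 actions. -/

import Mathlib

/-!
By the likelihood-ratio trick,
`∇η = ∑_g p(g) E_{τ∼g}[(∑_t ∇log π(a_t∣s_t,g)) (∑_{t'} r(s_{t'},g))]`.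
A cross term with `t' ≤ t` vanishes: `r(s_{t'}, g)` is fixed before `a_t` is drawn, and the score
`∇log π(a_t∣s_t,g)` has mean zero under `π(·∣s_t,g)`. A cross term with `t < t'` depends only on
the trajectory up to `s_{t'}`; since transitions and policies are normalized, its expectation does
not see the policy from step `t'` on, which may therefore be switched to that of `g'`. Changing the
first `t' - 1` actions from `g` to `g'` then costs exactly the truncated likelihood ratio.
-/

open Finset

/-- A trajectory `s_1, a_1, …, s_T` with horizon `T = n + 1`. -/
abbrev Traj (S A : Type) (n : ℕ) := (Fin (n + 1) → S) × (Fin n → A)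

/-- `p(τ ∣ g, θ) = p(s_1) ∏_{t=1}^{T-1} p(a_t ∣ s_t, g, θ) p(s_{t+1} ∣ s_t, a_t)`. -/
def trajProb {S A G : Type} (n : ℕ) (init : S → ℝ) (trans : S → A → S → ℝ)
    (pol : ℝ → G → S → A → ℝ) (θ : ℝ) (g : G) (τ : Traj S A n) : ℝ :=
  init (τ.1 0) * ∏ t : Fin n,
    pol θ g (τ.1 t.castSucc) (τ.2 t) * trans (τ.1 t.castSucc) (τ.2 t) (τ.1 t.succ)

/-- The expected return `η(θ) = ∑_g p(g) ∑_τ p(τ ∣ g, θ) ∑_{t=1}^T r(s_t, g)`. -/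
def expReturn {S A G : Type} [Fintype S] [Fintype A] [Fintype G] (n : ℕ)
    (init : S → ℝ) (trans : S → A → S → ℝ) (pol : ℝ → G → S → A → ℝ)
    (pG : G → ℝ) (r : S → G → ℝ) (θ : ℝ) : ℝ :=
  ∑ g : G, pG g * ∑ τ : Traj S A n,
    trajProb n init trans pol θ g τ * ∑ t : Fin (n + 1), r (τ.1 t) g

section Trajectory

variable {S A : Type}

def trajWeight {n : ℕ} (ρ : S → ℝ) (c : Fin n → S → A → S → ℝ) (τ : Traj S A n) : ℝ :=
  ρ (τ.1 0) * ∏ k, c k (τ.1 k.castSucc) (τ.2 k) (τ.1 k.succ)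

def DependsOnPrefix {n : ℕ} (m : ℕ) (f : Traj S A n → ℝ) : Prop :=
  ∀ τ τ' : Traj S A n, (∀ i : Fin (n + 1), (i : ℕ) ≤ m → τ.1 i = τ'.1 i) →
    (∀ k : Fin n, (k : ℕ) < m → τ.2 k = τ'.2 k) → f τ = f τ'

lemma dependsOnPrefix_state {n m : ℕ} (i : Fin (n + 1)) (hi : (i : ℕ) ≤ m) (u : S → ℝ) :
    DependsOnPrefix m fun τ : Traj S A n => u (τ.1 i) :=
  fun _ _ hs _ => congrArg u (hs i hi)

lemma dependsOnPrefix_step {n m : ℕ} (k : Fin n) (hk : (k : ℕ) < m) (v : S → A → ℝ) :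
    DependsOnPrefix m fun τ : Traj S A n => v (τ.1 k.castSucc) (τ.2 k) :=
  fun _ _ hs ha => congrArg₂ v (hs k.castSucc hk.le) (ha k hk)

lemma DependsOnPrefix.mul {n m : ℕ} {f f' : Traj S A n → ℝ} (hf : DependsOnPrefix m f)
    (hf' : DependsOnPrefix m f') : DependsOnPrefix m (f * f') :=
  fun τ τ' hs ha => by simp only [Pi.mul_apply, hf τ τ' hs ha, hf' τ τ' hs ha]

lemma sum_traj_succ [Fintype S] [Fintype A] {n : ℕ} (F : Traj S A (n + 1) → ℝ) :
    ∑ τ, F τ = ∑ s, ∑ a, ∑ τ : Traj S A n, F (Fin.cons s τ.1, Fin.cons a τ.2) := by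
  rw [← (Fin.consEquiv fun _ => S).prodCongr (Fin.consEquiv fun _ => A) |>.sum_comp]
  simp only [Fintype.sum_prod_type, Equiv.prodCongr_apply, Prod.map]
  exact sum_congr rfl fun s _ => sum_comm

lemma trajWeight_cons {n : ℕ} (ρ : S → ℝ) (c : Fin (n + 1) → S → A → S → ℝ) (s : S) (a : A)
    (τ : Traj S A n) :
    trajWeight ρ c (Fin.cons s τ.1, Fin.cons a τ.2) =
      ρ s * trajWeight (c 0 s a) (fun k => c k.succ) τ := by
  simp only [trajWeight, Fin.prod_univ_succ, ← Fin.succ_castSucc, Fin.cons_succ, Fin.cons_zero,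
    Fin.castSucc_zero]

lemma DependsOnPrefix.cons {n m : ℕ} {f : Traj S A (n + 1) → ℝ}
    (hf : DependsOnPrefix (m + 1) f) (s : S) (a : A) :
    DependsOnPrefix m fun τ : Traj S A n => f (Fin.cons s τ.1, Fin.cons a τ.2) := by
  intro τ τ' hs ha
  refine hf _ _ (fun i hi => ?_) (fun k hk => ?_)
  · cases i using Fin.cases with
    | zero => rfl
    | succ i => simpa using hs i (by simpa using hi)
  · cases k using Fin.cases with
    | zero => rfl
    | succ k => simpa using ha k (by simpa using hk)

lemma DependsOnPrefix.exists_eq_comp_zero {n : ℕ} {f : Traj S A n → ℝ}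
    (hf : DependsOnPrefix 0 f) : ∃ F : S → ℝ, ∀ τ, f τ = F (τ.1 0) := by
  classical
  -- A chosen representative trajectory: `A` may be empty.
  refine ⟨fun s => if h : ∃ τ : Traj S A n, τ.1 0 = s then f h.choose else 0, fun τ => ?_⟩
  have h : ∃ τ' : Traj S A n, τ'.1 0 = τ.1 0 := ⟨τ, rfl⟩
  simp only [dif_pos h]
  refine hf _ _ (fun i hi => ?_) (fun k hk => absurd hk k.val.not_lt_zero)
  obtain rfl : i = 0 := Fin.ext (Nat.le_zero.mp hi)
  exact h.choose_spec.symm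

lemma sum_trajWeight_of_normalized [Fintype S] [Fintype A] {n : ℕ} (ρ : S → ℝ)
    (c : Fin n → S → A → S → ℝ) (w : Fin n → ℝ) (hc : ∀ k s, ∑ a, ∑ s', c k s a s' = w k) :
    ∑ τ, trajWeight ρ c τ = (∑ s, ρ s) * ∏ k, w k := by
  induction n generalizing ρ with
  | zero =>
    simp only [trajWeight, univ_eq_empty, prod_empty, mul_one, Fintype.sum_prod_type,
      sum_const, card_univ, Fintype.card_unique, one_smul]
    exact Fintype.sum_equiv (Equiv.funUnique (Fin 1) S) _ _ fun _ => rfl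
  | succ n ih =>
    simp_rw [sum_traj_succ, trajWeight_cons, ← mul_sum,
      ih _ (fun k => c k.succ) (fun k => w k.succ) (fun k => hc k.succ), ← sum_mul, hc 0,
      Fin.prod_univ_succ, sum_mul]

lemma sum_trajWeight_mul_eq_of_dependsOnPrefix [Fintype S] [Fintype A] {n : ℕ} (m : ℕ)
    (ρ : S → ℝ) (c c' : Fin n → S → A → S → ℝ) (w : Fin n → ℝ)
    (hpre : ∀ k : Fin n, (k : ℕ) < m → c k = c' k)
    (hc : ∀ k : Fin n, m ≤ (k : ℕ) → ∀ s, ∑ a, ∑ s', c k s a s' = w k)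
    (hc' : ∀ k : Fin n, m ≤ (k : ℕ) → ∀ s, ∑ a, ∑ s', c' k s a s' = w k)
    (f : Traj S A n → ℝ) (hf : DependsOnPrefix m f) :
    ∑ τ, trajWeight ρ c τ * f τ = ∑ τ, trajWeight ρ c' τ * f τ := by
  induction n generalizing m ρ with
  | zero => rw [Subsingleton.elim c c']
  | succ n ih =>
    cases m with
    | zero =>
      obtain ⟨F, hF⟩ := hf.exists_eq_comp_zero
      have hweight : ∀ d : Fin (n + 1) → S → A → S → ℝ, ∀ τ,
          trajWeight ρ d τ * f τ = trajWeight (fun s => ρ s * F s) d τ := by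
        intro d τ
        rw [hF, trajWeight, trajWeight]
        ring
      simp only [hweight, sum_trajWeight_of_normalized _ _ w (fun k => hc k k.val.zero_le),
        sum_trajWeight_of_normalized _ _ w (fun k => hc' k k.val.zero_le)]
    | succ m =>
      simp only [sum_traj_succ, trajWeight_cons, hpre 0 m.succ_pos, mul_assoc, ← mul_sum]
      refine sum_congr rfl fun s _ => congrArg (ρ s * ·) <| sum_congr rfl fun a _ => ?_
      exact ih m _ (fun k => c k.succ) (fun k => c' k.succ) (fun k => w k.succ)
        (fun k hk => hpre k.succ (by simpa using hk)) (fun k hk => hc k.succ (by simpa using hk))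
        (fun k hk => hc' k.succ (by simpa using hk)) _ (hf.cons s a)

end Trajectory

lemma mul_deriv_log_eq_deriv {f : ℝ → ℝ} {x : ℝ} (hf : DifferentiableAt ℝ f x) (hx : f x ≠ 0) :
    f x * deriv (fun y => Real.log (f y)) x = deriv f x := by
  rw [deriv.log hf hx, mul_div_cancel₀ _ hx]

lemma sum_mul_deriv_log_eq_zero {ι : Type} [Fintype ι] {p : ℝ → ι → ℝ}
    (hp : ∀ i, Differentiable ℝ fun x => p x i) (hp0 : ∀ x i, p x i ≠ 0)
    (hp1 : ∀ x, ∑ i, p x i = 1) (x : ℝ) :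
    ∑ i, p x i * deriv (fun y => Real.log (p y i)) x = 0 := by
  rw [sum_congr rfl fun i _ => mul_deriv_log_eq_deriv (hp i x) (hp0 x i),
    ← deriv_fun_sum fun i _ => hp i x, funext hp1, deriv_const]

section Policy

variable {S A G : Type} (n : ℕ) (init : S → ℝ) (trans : S → A → S → ℝ) (pol : ℝ → G → S → A → ℝ)

lemma trajProb_eq_trajWeight (θ : ℝ) (g : G) :
    trajProb n init trans pol θ g = trajWeight init fun _ s a s' => pol θ g s a * trans s a s' :=
  rfl

lemma hasDerivAt_trajProb (θ : ℝ) (g : G) (hpol : ∀ s a, pol θ g s a ≠ 0)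
    (hpold : ∀ s a, DifferentiableAt ℝ (fun θ' => pol θ' g s a) θ) (τ : Traj S A n) :
    HasDerivAt (fun θ' => trajProb n init trans pol θ' g τ)
      (trajProb n init trans pol θ g τ *
        ∑ t : Fin n, deriv (fun θ' => Real.log (pol θ' g (τ.1 t.castSucc) (τ.2 t))) θ) θ := by
  have hprod := HasDerivAt.fun_finsetProd (u := univ) fun t _ =>
    (hpold (τ.1 t.castSucc) (τ.2 t)).hasDerivAt.mul_const
      (trans (τ.1 t.castSucc) (τ.2 t) (τ.1 t.succ))
  refine (hprod.const_mul (init (τ.1 0))).congr_deriv ?_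
  rw [trajProb, mul_sum, mul_sum]
  refine sum_congr rfl fun t _ => ?_
  rw [← mul_prod_erase univ _ (mem_univ t), smul_eq_mul,
    ← mul_deriv_log_eq_deriv (hpold _ _) (hpol _ _)]
  ring

lemma deriv_expReturn [Fintype S] [Fintype A] [Fintype G] (pG : G → ℝ) (r : S → G → ℝ) (θ : ℝ)
    (hpol : ∀ g s a, pol θ g s a ≠ 0)
    (hpold : ∀ g s a, DifferentiableAt ℝ (fun θ' => pol θ' g s a) θ) :
    deriv (expReturn n init trans pol pG r) θ =
      ∑ g, pG g * ∑ τ : Traj S A n, trajProb n init trans pol θ g τ *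
        (∑ t : Fin n, deriv (fun θ' => Real.log (pol θ' g (τ.1 t.castSucc) (τ.2 t))) θ) *
          ∑ t' : Fin (n + 1), r (τ.1 t') g :=
  (HasDerivAt.fun_sum fun g _ => (HasDerivAt.fun_sum fun τ _ =>
    (hasDerivAt_trajProb n init trans pol θ g (hpol g) (hpold g) τ).mul_const _).const_mul
      (pG g)).deriv

lemma sum_sum_mul_trans [Fintype S] [Fintype A] (htrans1 : ∀ s a, ∑ s', trans s a s' = 1)
    (q : A → ℝ) (s : S) : ∑ a, ∑ s', q a * trans s a s' = ∑ a, q a := by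
  simp only [← mul_sum, htrans1, mul_one]

lemma sum_trajProb_mul_eq_zero_of_centered [Fintype S] [Fintype A]
    (htrans1 : ∀ s a, ∑ s', trans s a s' = 1) (θ : ℝ) (g : G)
    (hpol1 : ∀ s, ∑ a, pol θ g s a = 1) (v : S → A → ℝ)
    (hv : ∀ s, ∑ a, pol θ g s a * v s a = 0) (t : Fin n) (f : Traj S A n → ℝ)
    (hf : DependsOnPrefix t f) :
    ∑ τ, trajProb n init trans pol θ g τ * (v (τ.1 t.castSucc) (τ.2 t) * f τ) = 0 := by
  set c : Fin n → S → A → S → ℝ :=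
    fun k s a s' => pol θ g s a * (if k = t then v s a else 1) * trans s a s'
  set c' : Fin n → S → A → S → ℝ :=
    fun k s a s' => (if k = t then 0 else pol θ g s a) * trans s a s'
  have hweight : ∀ τ, trajProb n init trans pol θ g τ * (v (τ.1 t.castSucc) (τ.2 t) * f τ) =
      trajWeight init c τ * f τ := by
    intro τ
    simp only [trajProb, trajWeight, c, mul_right_comm _ (ite _ _ _), prod_mul_distrib,
      prod_ite_eq', mem_univ, if_true]
    ring
  -- At step `t` both `c` and the zero kernel `c'` have mass `∑ₐ π(a∣s) v(s, a) = 0`.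
  rw [sum_congr rfl fun τ _ => hweight τ, sum_trajWeight_mul_eq_of_dependsOnPrefix t init c c'
    (fun k => if k = t then 0 else 1) ?_ ?_ ?_ f hf]
  · refine sum_eq_zero fun τ _ => ?_
    rw [trajWeight, prod_eq_zero (mem_univ t) (by simp [c']), mul_zero, zero_mul]
  · intro k hk
    have hkt : k ≠ t := by rintro rfl; exact hk.false
    simp [c, c', hkt]
  · intro k _ s
    simp only [c, sum_sum_mul_trans trans htrans1 _ s]
    split_ifs <;> simp [hv, hpol1]
  · intro k _ s
    simp only [c', sum_sum_mul_trans trans htrans1 _ s]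
    split_ifs <;> simp [hpol1]

lemma sum_trajProb_mul_eq_reweighted [Fintype S] [Fintype A]
    (htrans1 : ∀ s a, ∑ s', trans s a s' = 1) (θ : ℝ) (g g' : G)
    (hpol1 : ∀ s, ∑ a, pol θ g s a = 1) (hpol1' : ∀ s, ∑ a, pol θ g' s a = 1)
    (hpol' : ∀ s a, pol θ g' s a ≠ 0) (t' : Fin (n + 1)) (f : Traj S A n → ℝ)
    (hf : DependsOnPrefix t' f) :
    ∑ τ, trajProb n init trans pol θ g τ * f τ =
      ∑ τ, trajProb n init trans pol θ g' τ *
        ((∏ k : Fin n, if k.castSucc < t' then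
            pol θ g (τ.1 k.castSucc) (τ.2 k) / pol θ g' (τ.1 k.castSucc) (τ.2 k) else 1) *
          f τ) := by
  set c : Fin n → S → A → S → ℝ :=
    fun k s a s' => (if k.castSucc < t' then pol θ g s a else pol θ g' s a) * trans s a s'
  have hweight : ∀ τ : Traj S A n, trajProb n init trans pol θ g' τ *
      ((∏ k : Fin n, if k.castSucc < t' then
          pol θ g (τ.1 k.castSucc) (τ.2 k) / pol θ g' (τ.1 k.castSucc) (τ.2 k) else 1) * f τ) =
      trajWeight init c τ * f τ := by
    intro τ
    rw [trajProb, trajWeight, ← mul_assoc, mul_assoc (init _), ← prod_mul_distrib]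
    congr 3 with k
    simp only [c]
    split_ifs
    · field_simp [hpol']
    · ring
  rw [sum_congr rfl fun τ _ => hweight τ, trajProb_eq_trajWeight]
  refine sum_trajWeight_mul_eq_of_dependsOnPrefix t' init _ c (fun _ => 1) (fun k hk => ?_)
    (fun k _ s => ?_) (fun k hk s => ?_) f hf
  · simp [c, Fin.lt_def, hk]
  · rw [sum_sum_mul_trans trans htrans1 _ s, hpol1]
  · simp only [c, Fin.lt_def, Fin.val_castSucc, not_lt.mpr hk, if_false]
    rw [sum_sum_mul_trans trans htrans1 _ s, hpol1']

lemma sum_trajProb_mul_sum_mul_sum_eq_per_decision [Fintype S] [Fintype A]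
    (htrans1 : ∀ s a, ∑ s', trans s a s' = 1) (θ : ℝ) (g g' : G)
    (hpol1 : ∀ s, ∑ a, pol θ g s a = 1) (hpol1' : ∀ s, ∑ a, pol θ g' s a = 1)
    (hpol' : ∀ s a, pol θ g' s a ≠ 0) (v : S → A → ℝ)
    (hv : ∀ s, ∑ a, pol θ g s a * v s a = 0) (R : S → ℝ) :
    ∑ τ : Traj S A n, trajProb n init trans pol θ g τ *
        (∑ t : Fin n, v (τ.1 t.castSucc) (τ.2 t)) * ∑ t' : Fin (n + 1), R (τ.1 t') =
      ∑ τ : Traj S A n, trajProb n init trans pol θ g' τ *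
        ∑ t : Fin n, v (τ.1 t.castSucc) (τ.2 t) *
          ∑ t' ∈ univ.filter (fun t' : Fin (n + 1) => t.castSucc < t'),
            (∏ k : Fin n, if k.castSucc < t' then
                pol θ g (τ.1 k.castSucc) (τ.2 k) / pol θ g' (τ.1 k.castSucc) (τ.2 k) else 1) *
              R (τ.1 t') := by
  calc _ = ∑ t : Fin n, ∑ t' : Fin (n + 1), ∑ τ : Traj S A n,
        trajProb n init trans pol θ g τ * (v (τ.1 t.castSucc) (τ.2 t) * R (τ.1 t')) := by
        simp only [mul_sum, sum_mul, mul_assoc]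
        refine sum_comm.trans <| (sum_congr rfl fun _ _ => sum_comm).trans sum_comm
    _ = ∑ t : Fin n, ∑ t' ∈ univ.filter (fun t' : Fin (n + 1) => t.castSucc < t'),
        ∑ τ : Traj S A n,
          trajProb n init trans pol θ g τ * (v (τ.1 t.castSucc) (τ.2 t) * R (τ.1 t')) := by
        refine sum_congr rfl fun t _ => ?_
        rw [← sum_filter_add_sum_filter_not _ (fun t' : Fin (n + 1) => t.castSucc < t'),
          add_eq_left]
        refine sum_eq_zero fun t' ht' => ?_
        rw [mem_filter, not_lt] at ht'
        rw [sum_trajProb_mul_eq_zero_of_centered n init trans pol htrans1 θ g hpol1 v hv t _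
          (dependsOnPrefix_state t' ht'.2 R)]
    _ = ∑ t : Fin n, ∑ t' ∈ univ.filter (fun t' : Fin (n + 1) => t.castSucc < t'),
        ∑ τ : Traj S A n, trajProb n init trans pol θ g' τ *
          ((∏ k : Fin n, if k.castSucc < t' then
              pol θ g (τ.1 k.castSucc) (τ.2 k) / pol θ g' (τ.1 k.castSucc) (τ.2 k) else 1) *
            (v (τ.1 t.castSucc) (τ.2 t) * R (τ.1 t'))) := by
        refine sum_congr rfl fun t _ => sum_congr rfl fun t' ht' => ?_
        rw [mem_filter, Fin.lt_def, Fin.val_castSucc] at ht'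
        exact sum_trajProb_mul_eq_reweighted n init trans pol htrans1 θ g g'
          hpol1 hpol1' hpol' t' _ ((dependsOnPrefix_step t ht'.2 v).mul
            (dependsOnPrefix_state t' le_rfl R))
    _ = _ := by
        simp only [mul_sum]
        rw [sum_comm]
        exact sum_congr rfl fun t _ => sum_comm.trans <|
          sum_congr rfl fun τ _ => sum_congr rfl fun t' _ => by ring

end Policy

theorem per_decision_hindsight_policy_gradient_general {S A G : Type}
    [Fintype S] [Fintype A] [Fintype G]
    (n : ℕ) (init : S → ℝ) (trans : S → A → S → ℝ) (pol : ℝ → G → S → A → ℝ)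
    (pG : G → ℝ) (r : S → G → ℝ)
    (htrans1 : ∀ s a, ∑ s' : S, trans s a s' = 1)
    (hpol : ∀ (θ' : ℝ) (g : G) (s : S) (a : A), 0 < pol θ' g s a)
    (hpold : ∀ (g : G) (s : S) (a : A), Differentiable ℝ fun θ' => pol θ' g s a)
    (hpol1 : ∀ (θ' : ℝ) (g : G) (s : S), ∑ a : A, pol θ' g s a = 1)
    (θ : ℝ) (g' : G) :
    deriv (expReturn n init trans pol pG r) θ =
      ∑ τ : Traj S A n, trajProb n init trans pol θ g' τ *
        ∑ g : G, pG g * ∑ t : Fin n,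
          deriv (fun θ'' => Real.log (pol θ'' g (τ.1 t.castSucc) (τ.2 t))) θ *
            ∑ t' ∈ univ.filter (fun t' : Fin (n + 1) => t.castSucc < t'),
              (∏ k : Fin n,
                  if k.castSucc < t' then
                    pol θ g (τ.1 k.castSucc) (τ.2 k) / pol θ g' (τ.1 k.castSucc) (τ.2 k)
                  else 1) *
                r (τ.1 t') g := by
  have hpol0 : ∀ θ' g s a, pol θ' g s a ≠ 0 := fun θ' g s a => (hpol θ' g s a).ne'
  have hscore : ∀ g s, ∑ a, pol θ g s a * deriv (fun θ' => Real.log (pol θ' g s a)) θ = 0 :=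
    fun g s => sum_mul_deriv_log_eq_zero (fun a => hpold g s a) (fun θ' => hpol0 θ' g s)
      (fun θ' => hpol1 θ' g s) θ
  rw [deriv_expReturn n init trans pol pG r θ (hpol0 θ) fun g s a => hpold g s a θ,
    sum_congr rfl fun g _ => congrArg (pG g * ·) <|
      sum_trajProb_mul_sum_mul_sum_eq_per_decision n init trans pol htrans1 θ g g' (hpol1 θ g)
        (hpol1 θ g') (hpol0 θ g') _ (hscore g) (r · g)]
  simp only [mul_sum, mul_left_comm (pG _)]
  exact sum_comm

/-- the per-decision hindsight policy gradient. For any fixed original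
goal `g'`, `∇η(θ) = ∑_τ p(τ∣g',θ) ∑_g p(g) ∑_{t=1}^{T-1} ∇ log p(a_t∣s_t,g,θ)
∑_{t'=t+1}^T [∏_{k=1}^{t'-1} p(a_k∣s_k,g,θ)/p(a_k∣s_k,g',θ)] r(s_{t'}, g)`:
the importance weight for the reward at time `t'` is truncated to the first `t'-1` actions. -/
theorem per_decision_hindsight_policy_gradient {S A G : Type}
    [Fintype S] [Fintype A] [Fintype G]
    (n : ℕ) (init : S → ℝ) (trans : S → A → S → ℝ) (pol : ℝ → G → S → A → ℝ)
    (pG : G → ℝ) (r : S → G → ℝ)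
    (hinit : ∀ s, 0 < init s) (hinit1 : ∑ s : S, init s = 1)
    (htrans : ∀ s a s', 0 < trans s a s') (htrans1 : ∀ s a, ∑ s' : S, trans s a s' = 1)
    (hpol : ∀ (θ' : ℝ) (g : G) (s : S) (a : A), 0 < pol θ' g s a)
    (hpold : ∀ (g : G) (s : S) (a : A), Differentiable ℝ fun θ' => pol θ' g s a)
    (hpol1 : ∀ (θ' : ℝ) (g : G) (s : S), ∑ a : A, pol θ' g s a = 1)
    (hpG : ∀ g, 0 ≤ pG g) (hpG1 : ∑ g : G, pG g = 1)
    (θ : ℝ) (g' : G) :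
    deriv (expReturn n init trans pol pG r) θ =
      ∑ τ : Traj S A n, trajProb n init trans pol θ g' τ *
        ∑ g : G, pG g * ∑ t : Fin n,
          deriv (fun θ'' => Real.log (pol θ'' g (τ.1 t.castSucc) (τ.2 t))) θ *
            ∑ t' ∈ univ.filter (fun t' : Fin (n + 1) => t.castSucc < t'),
              (∏ k : Fin n,
                  if k.castSucc < t' then
                    pol θ g (τ.1 k.castSucc) (τ.2 k) / pol θ g' (τ.1 k.castSucc) (τ.2 k)
                  else 1) *
                r (τ.1 t') g :=
  per_decision_hindsight_policy_gradient_general n init trans pol pG r htrans1 hpol hpold hpol1 θ g'
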